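/- Let M be an m×m complex matrix (m ≥ 1) and let ρ(M) be its spectral radius. Then lim sup_{n→∞} |tr(M^n)|^{1/n} = ρ(M), where tr denotes the trace and the lim sup is taken over the sequence of nonnegative reals |tr(M^n)|^{1/n} for n ≥ 1. -/

import Mathlib

/-!
The eigenvalues of `q(M)`, counted with multiplicity, are the values of `q` at those
of `M`: factoring `C y - q` over `ℂ` evaluates `det (y - q(M))` as `∏ λ, (y - q λ)`.
Hence `tr (M ^ n)` is the power sum `Sₙ = ∑ λⁿ` of the eigenvalues, and `‖Sₙ‖ ≤ m ρⁿ`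
gives `limsup ‖Sₙ‖ ^ (1/n) ≤ ρ`.

For the reverse inequality rescale so that `ρ = 1`. If `Sₙ → 0` then also
`‖Sₙ‖² = ∑ λ μ, (λ μ̄)ⁿ → 0`; but the Cesàro means of `∑ λ μ, (λ μ̄)ⁿ` converge to the
number of pairs with `λ μ̄ = 1`, which is positive since `λ λ̄ = 1` for an eigenvalue of
modulus `1`. So `‖Sₙ‖ > rⁿ` infinitely often for every `r < ρ`.
-/

/-- The spectral radius of a square complex matrix: the maximal absolute value
of the roots in `ℂ` of its characteristic polynomial. -/
noncomputable def specRad {m : ℕ} (M : Matrix (Fin m) (Fin m) ℂ) : ℝ :=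
  (((M.charpoly.roots.map fun z => ‖z‖₊).sup : NNReal) : ℝ)

open Polynomial Filter Topology Finset ComplexConjugate

namespace Matrix

variable {n K : Type*} [Fintype n] [DecidableEq n] [Field K] [IsAlgClosed K]

theorem card_roots_charpoly (M : Matrix n n K) :
    M.charpoly.roots.card = Fintype.card n := by
  rw [splits_iff_card_roots.mp (IsAlgClosed.splits M.charpoly), charpoly_natDegree_eq_dim]

theorem det_sub_scalar_eq_prod_roots_charpoly (M : Matrix n n K) (r : K) :
    (M - scalar n r).det = (M.charpoly.roots.map (· - r)).prod := by
  have hneg : M - scalar n r = -(scalar n r - M) := (neg_sub _ _).symm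
  rw [hneg, det_neg, ← eval_charpoly,
    (IsAlgClosed.splits M.charpoly).eval_eq_prod_roots_of_monic M.charpoly_monic,
    ← card_roots_charpoly M, ← Multiset.card_map (r - ·), ← Multiset.prod_map_neg,
    Multiset.map_map]
  simp

theorem det_aeval_eq_prod_roots_charpoly (M : Matrix n n K) (p : K[X]) :
    (aeval M p).det = (M.charpoly.roots.map p.eval).prod := by
  have hp := IsAlgClosed.splits p
  let detAeval : K[X] →* K := detMonoidHom.comp (aeval M).toMonoidHom
  have hroot (r : K) : detAeval (X - C r) = (M.charpoly.roots.map (· - r)).prod := by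
    simp [detAeval, Algebra.algebraMap_eq_smul_one, ← det_sub_scalar_eq_prod_roots_charpoly,
      smul_one_eq_diagonal]
  have hlead : detAeval (C p.leadingCoeff) = p.leadingCoeff ^ Fintype.card n := by
    simp [detAeval, Algebra.algebraMap_eq_smul_one]
  change detAeval p = _
  conv_lhs => rw [hp.eq_prod_roots]
  simp_rw [hp.eval_eq_prod_roots]
  rw [map_mul, map_multiset_prod, Multiset.map_map, Function.comp_def, hlead]
  simp_rw [hroot]
  rw [Multiset.prod_map_mul, Multiset.map_const', Multiset.prod_replicate, card_roots_charpoly,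
    Multiset.prod_map_prod_map]

theorem charpoly_aeval_eq_prod (M : Matrix n n K) (q : K[X]) :
    (aeval M q).charpoly = ((M.charpoly.roots.map q.eval).map (X - C ·)).prod := by
  refine Polynomial.funext fun y => ?_
  have : scalar n y - aeval M q = aeval M (C y - q) := by
    simp [Algebra.algebraMap_eq_smul_one, smul_one_eq_diagonal]
  rw [eval_charpoly, this, det_aeval_eq_prod_roots_charpoly, eval_multiset_prod,
    Multiset.map_map, Multiset.map_map]
  simp

theorem roots_charpoly_aeval (M : Matrix n n K) (q : K[X]) :
    (aeval M q).charpoly.roots = M.charpoly.roots.map q.eval := by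
  rw [charpoly_aeval_eq_prod, roots_multiset_prod_X_sub_C]

theorem trace_pow_eq_sum_roots_charpoly_pow (M : Matrix n n K) (k : ℕ) :
    (M ^ k).trace = (M.charpoly.roots.map (· ^ k)).sum := by
  simpa [trace_eq_sum_roots_charpoly] using
    congrArg Multiset.sum (roots_charpoly_aeval M (X ^ k))

end Matrix

section PowerSums

variable {s : Multiset ℂ} {ρ : ℝ}

theorem norm_geom_sum_le_of_ne_one {w : ℂ} (hw : ‖w‖ ≤ 1) (h1 : w ≠ 1) (N : ℕ) :
    ‖∑ k ∈ range N, w ^ k‖ ≤ 2 / ‖w - 1‖ := by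
  rw [geom_sum_eq h1, norm_div]
  gcongr
  calc ‖w ^ N - 1‖ ≤ ‖w‖ ^ N + ‖(1 : ℂ)‖ := by
        rw [← norm_pow]; exact norm_sub_le _ _
    _ ≤ 2 := by rw [norm_one]; linarith [pow_le_one₀ (norm_nonneg w) hw (n := N)]

theorem tendsto_cesaro_pow {w : ℂ} (hw : ‖w‖ ≤ 1) :
    Tendsto (fun N : ℕ => (N⁻¹ : ℝ) • ∑ k ∈ range N, w ^ k) atTop
      (𝓝 (if w = 1 then 1 else 0)) := by
  split_ifs with h1
  · simpa [h1] using (tendsto_const_nhds (x := (1 : ℂ))).cesaro_smul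
  · refine squeeze_zero_norm (fun N => ?_)
      (tendsto_const_div_atTop_nhds_zero_nat (2 / ‖w - 1‖))
    rw [norm_smul, Real.norm_of_nonneg (by positivity), inv_mul_eq_div]
    gcongr
    exact norm_geom_sum_le_of_ne_one hw h1 N

theorem tendsto_cesaro_sum_pow (t : Multiset ℂ) (ht : ∀ w ∈ t, ‖w‖ ≤ 1) :
    Tendsto (fun N : ℕ => (N⁻¹ : ℝ) • ∑ k ∈ range N, (t.map (· ^ k)).sum) atTop
      (𝓝 (t.count 1 : ℂ)) := by
  induction t using Multiset.induction with
  | empty => simp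
  | cons w t ih =>
    simp only [Multiset.map_cons, Multiset.sum_cons, sum_add_distrib, smul_add,
      Multiset.count_cons, eq_comm (a := (1 : ℂ)), Nat.cast_add, Nat.cast_ite, Nat.cast_one,
      Nat.cast_zero]
    rw [add_comm]
    exact (tendsto_cesaro_pow (ht w (Multiset.mem_cons_self w t))).add
      (ih fun v hv => ht v (Multiset.mem_cons_of_mem hv))

theorem not_tendsto_sum_pow_zero_of_one_mem {t : Multiset ℂ} (ht : ∀ w ∈ t, ‖w‖ ≤ 1)
    (h1 : 1 ∈ t) : ¬ Tendsto (fun k => (t.map (· ^ k)).sum) atTop (𝓝 0) := fun h => by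
  have hcount : (t.count 1 : ℂ) = 0 :=
    tendsto_nhds_unique (tendsto_cesaro_sum_pow t ht) h.cesaro_smul
  exact Multiset.count_ne_zero.mpr h1 (by exact_mod_cast hcount)

theorem sum_pow_mul_conj_eq_norm_sq (s : Multiset ℂ) (k : ℕ) :
    ((s.bind fun a => s.map fun b => a * conj b).map (· ^ k)).sum
      = ‖(s.map (· ^ k)).sum‖ ^ 2 := by
  rw [← Complex.mul_conj', map_multiset_sum, Multiset.map_bind, Multiset.sum_bind,
    ← Multiset.sum_map_mul_right, Multiset.map_map]
  congr 1
  refine Multiset.map_congr rfl fun a _ => ?_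
  simp [Multiset.map_map, mul_pow, ← Multiset.sum_map_mul_left]

theorem not_tendsto_sum_pow_zero (hs : ∀ a ∈ s, ‖a‖ ≤ 1) {a : ℂ} (ha : a ∈ s)
    (ha1 : ‖a‖ = 1) : ¬ Tendsto (fun k => (s.map (· ^ k)).sum) atTop (𝓝 0) := fun h => by
  refine not_tendsto_sum_pow_zero_of_one_mem (t := s.bind fun a => s.map fun b => a * conj b)
    ?_ ?_ ?_
  · simp only [Multiset.mem_bind, Multiset.mem_map]
    rintro _ ⟨b, hb, c, hc, rfl⟩
    rw [norm_mul, Complex.norm_conj]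
    exact mul_le_one₀ (hs b hb) (norm_nonneg c) (hs c hc)
  · exact Multiset.mem_bind.mpr
      ⟨a, ha, Multiset.mem_map.mpr ⟨a, ha, by simp [Complex.mul_conj', ha1]⟩⟩
  · simp_rw [sum_pow_mul_conj_eq_norm_sq]
    simpa using (h.norm.pow 2).ofReal

theorem frequently_pow_lt_norm_sum_pow {a : ℂ} (ha : a ∈ s) {r : ℝ}
    (hr0 : 0 ≤ r) (hr : r < ‖a‖) : ∃ᶠ k in atTop, r ^ k < ‖(s.map (· ^ k)).sum‖ := by
  classical
  obtain ⟨b, hb, hmax⟩ :=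
    s.toFinset.exists_max_image (‖·‖) ⟨a, Multiset.mem_toFinset.mpr ha⟩
  rw [Multiset.mem_toFinset] at hb
  have hrb : r < ‖b‖ := hr.trans_le (hmax a (Multiset.mem_toFinset.mpr ha))
  have hb0 : b ≠ 0 := norm_pos_iff.mp (hr0.trans_lt hrb)
  have hscaled := not_tendsto_sum_pow_zero (s := s.map (· / b))
    (by simpa [norm_div, div_le_one (hr0.trans_lt hrb)] using
      fun c hc => hmax c (Multiset.mem_toFinset.mpr hc))
    (Multiset.mem_map_of_mem _ hb) (by simp [hb0])
  contrapose! hscaled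
  refine squeeze_zero_norm' ?_ (tendsto_pow_atTop_nhds_zero_of_lt_one
    (div_nonneg hr0 (norm_nonneg b)) ((div_lt_one (hr0.trans_lt hrb)).mpr hrb))
  filter_upwards [hscaled] with k hk
  simp_rw [Multiset.map_map, Function.comp_def, div_pow, Multiset.sum_map_div, norm_div, norm_pow]
  gcongr

theorem norm_sum_pow_le (hs : ∀ a ∈ s, ‖a‖ ≤ ρ) (k : ℕ) :
    ‖(s.map (· ^ k)).sum‖ ≤ s.card * ρ ^ k := by
  refine (norm_multiset_sum_le _).trans ?_
  have hle : ∀ x ∈ (s.map (· ^ k)).map (‖·‖), x ≤ ρ ^ k := by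
    simpa using fun a ha => pow_le_pow_left₀ (norm_nonneg a) (hs a ha) k
  simpa using Multiset.sum_le_card_nsmul _ _ hle

/-- The `+ 1` keeps the base positive, so that its `k`-th root tends to `1`. -/
theorem norm_sum_pow_rpow_le (hρ : 0 ≤ ρ) (hs : ∀ a ∈ s, ‖a‖ ≤ ρ) {k : ℕ} (hk : k ≠ 0) :
    ‖(s.map (· ^ k)).sum‖ ^ ((1 : ℝ) / k) ≤ ((s.card : ℝ) + 1) ^ ((1 : ℝ) / k) * ρ := by
  have hbound : ‖(s.map (· ^ k)).sum‖ ≤ ((s.card : ℝ) + 1) * ρ ^ k :=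
    (norm_sum_pow_le hs k).trans (by gcongr; linarith)
  calc ‖(s.map (· ^ k)).sum‖ ^ ((1 : ℝ) / k)
      _ ≤ (((s.card : ℝ) + 1) * ρ ^ k) ^ ((1 : ℝ) / k) :=
        Real.rpow_le_rpow (norm_nonneg _) hbound (by positivity)
      _ = ((s.card : ℝ) + 1) ^ ((1 : ℝ) / k) * ρ := by
        rw [Real.mul_rpow (by positivity) (by positivity), one_div,
          Real.pow_rpow_inv_natCast hρ hk]

theorem tendsto_rpow_one_div_natCast_mul {c : ℝ} (hc : 0 < c) (ρ : ℝ) :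
    Tendsto (fun k : ℕ => c ^ ((1 : ℝ) / k) * ρ) atTop (𝓝 ρ) := by
  simpa using (((Real.continuousAt_const_rpow hc.ne').tendsto).comp
    tendsto_one_div_atTop_nhds_zero_nat).mul_const ρ

theorem isBoundedUnder_norm_sum_pow_rpow (hρ : 0 ≤ ρ) (hs : ∀ a ∈ s, ‖a‖ ≤ ρ) :
    IsBoundedUnder (· ≤ ·) atTop fun k : ℕ => ‖(s.map (· ^ k)).sum‖ ^ ((1 : ℝ) / k) :=
  (tendsto_rpow_one_div_natCast_mul (by positivity) ρ).isBoundedUnder_le.mono_le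
    ((eventually_ne_atTop 0).mono fun _ hk => norm_sum_pow_rpow_le hρ hs hk)

theorem limsup_norm_sum_pow_rpow_le (hρ : 0 ≤ ρ) (hs : ∀ a ∈ s, ‖a‖ ≤ ρ) :
    limsup (fun k : ℕ => ‖(s.map (· ^ k)).sum‖ ^ ((1 : ℝ) / k)) atTop ≤ ρ := by
  have hρlim := tendsto_rpow_one_div_natCast_mul (c := (s.card : ℝ) + 1) (by positivity) ρ
  rw [← hρlim.limsup_eq]
  exact limsup_le_limsup
    ((eventually_ne_atTop 0).mono fun _ hk => norm_sum_pow_rpow_le hρ hs hk)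
    (isCoboundedUnder_le_of_le atTop fun _ => by positivity) hρlim.isBoundedUnder_le

theorem norm_le_limsup_norm_sum_pow_rpow {a : ℂ} (ha : a ∈ s)
    (hbdd : IsBoundedUnder (· ≤ ·) atTop
      fun k : ℕ => ‖(s.map (· ^ k)).sum‖ ^ ((1 : ℝ) / k)) :
    ‖a‖ ≤ limsup (fun k : ℕ => ‖(s.map (· ^ k)).sum‖ ^ ((1 : ℝ) / k)) atTop := by
  refine le_of_forall_lt_imp_le_of_dense fun r hr => ?_
  rcases lt_or_ge r 0 with hr0 | hr0
  · exact hr0.le.trans (le_limsup_of_frequently_le (.of_forall fun _ => by positivity) hbdd)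
  refine le_limsup_of_frequently_le ?_ hbdd
  refine ((frequently_pow_lt_norm_sum_pow ha hr0 hr).and_eventually
    (eventually_ne_atTop 0)).mono ?_
  rintro k ⟨hlt, hk⟩
  calc r = (r ^ k) ^ ((1 : ℝ) / k) := by rw [one_div, Real.pow_rpow_inv_natCast hr0 hk]
    _ ≤ ‖(s.map (· ^ k)).sum‖ ^ ((1 : ℝ) / k) :=
      Real.rpow_le_rpow (by positivity) hlt.le (by positivity)

theorem limsup_norm_sum_pow_rpow_eq_sup_nnnorm (s : Multiset ℂ) :
    limsup (fun k : ℕ => ‖(s.map (· ^ k)).sum‖ ^ ((1 : ℝ) / k)) atTop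
      = (((s.map fun z => ‖z‖₊).sup : NNReal) : ℝ) := by
  have hs : ∀ a ∈ s, ‖a‖ ≤ (((s.map fun z => ‖z‖₊).sup : NNReal) : ℝ) :=
    fun a ha => NNReal.coe_le_coe.mpr (Multiset.le_sup (Multiset.mem_map_of_mem (‖·‖₊) ha))
  have hbdd := isBoundedUnder_norm_sum_pow_rpow (NNReal.coe_nonneg _) hs
  refine le_antisymm (limsup_norm_sum_pow_rpow_le (NNReal.coe_nonneg _) hs) ?_
  have hL : 0 ≤ limsup (fun k : ℕ => ‖(s.map (· ^ k)).sum‖ ^ ((1 : ℝ) / k)) atTop :=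
    le_limsup_of_frequently_le (.of_forall fun _ => by positivity) hbdd
  change _ ≤ ((⟨_, hL⟩ : NNReal) : ℝ)
  refine NNReal.coe_le_coe.mpr (Multiset.sup_le.mpr fun b hb => ?_)
  obtain ⟨a, ha, rfl⟩ := Multiset.mem_map.mp hb
  exact norm_le_limsup_norm_sum_pow_rpow ha hbdd

end PowerSums

theorem limsup_abs_trace_pow_rpow_eq_spectralRadius_general
    {m : ℕ} (M : Matrix (Fin m) (Fin m) ℂ) :
    Filter.limsup
      (fun n : ℕ => ‖Matrix.trace (M ^ n)‖ ^ ((1 : ℝ) / n))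
      Filter.atTop = specRad M := by
  simp_rw [Matrix.trace_pow_eq_sum_roots_charpoly_pow]
  exact limsup_norm_sum_pow_rpow_eq_sup_nnnorm _

/-- Wimmer's formula: `limsup |tr(M^n)|^{1/n} = ρ(M)`. -/
theorem limsup_abs_trace_pow_rpow_eq_spectralRadius
    {m : ℕ} (hm : 1 ≤ m) (M : Matrix (Fin m) (Fin m) ℂ) :
    Filter.limsup
      (fun n : ℕ => ‖Matrix.trace (M ^ n)‖ ^ ((1 : ℝ) / n))
      Filter.atTop = specRad M :=
  limsup_abs_trace_pow_rpow_eq_spectralRadius_general M
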